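/- arXiv:1604.05757 — 3 statements merged into one kernel-verified Lean document; each statement's English description precedes it below -/
import Mathlib

section
/- The cycle with shortcuts 𝔠_12 — the graph on vertex set {0,…,11} with an edge {u,v} iff |u−v| ∈ {1,3,9,11}, viewed as a bipartite graph with parts the even and the odd vertices — is not constructible by conditioning. -/
/-- The class of bipartite graphs (presented by part types `X`, `Y`, vertex sets
`vx ⊆ X`, `vy ⊆ Y`, and an edge set `E ⊆ X × Y`) that are constructible by
conditioning, together with the number of doubling steps used.

* `single`: a single edge is constructible (0 doublings);
* `double`: doubling the old vertices `ox ⊆ vx`, `oy ⊆ vy` (the remaining vertices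
  being fixed) adds a fresh copy of every old vertex, and for every edge that is not
  entirely fixed, a new edge in which every old endpoint is replaced by its copy;
* `collapse`: if some homomorphism of the graph into the induced subgraph on
  `px ⊆ vx`, `py ⊆ vy` is the identity on `px ∪ py`, then that induced subgraph
  is constructible;
* `iso`: the class is closed under isomorphic re-presentation of a graph
  (injectively re-embedding the two parts). -/
inductive ConstructibleBip :
    ∀ (X Y : Type), Set X → Set Y → Set (X × Y) → ℕ → Prop where
  | single (X Y : Type) (x : X) (y : Y) :
      ConstructibleBip X Y {x} {y} {(x, y)} 0
  | double (X Y : Type) (vx : Set X) (vy : Set Y) (E : Set (X × Y))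
      (ox : Set X) (oy : Set Y) (k : ℕ)
      (hox : ox ⊆ vx) (hoy : oy ⊆ vy)
      (h : ConstructibleBip X Y vx vy E k) :
      ConstructibleBip (X ⊕ X) (Y ⊕ Y)
        (Sum.inl '' vx ∪ Sum.inr '' ox) (Sum.inl '' vy ∪ Sum.inr '' oy)
        ({ e' | ∃ e ∈ E, e' = (Sum.inl e.1, Sum.inl e.2) } ∪
         { e' | ∃ e ∈ E, (e.1 ∈ ox ∨ e.2 ∈ oy) ∧
            ((e.1 ∈ ox ∧ e'.1 = Sum.inr e.1) ∨ (e.1 ∉ ox ∧ e'.1 = Sum.inl e.1)) ∧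
            ((e.2 ∈ oy ∧ e'.2 = Sum.inr e.2) ∨ (e.2 ∉ oy ∧ e'.2 = Sum.inl e.2)) })
        (k + 1)
  | collapse (X Y : Type) (vx px : Set X) (vy py : Set Y) (E : Set (X × Y)) (k : ℕ)
      (fx : X → X) (fy : Y → Y)
      (hpx : px ⊆ vx) (hpy : py ⊆ vy)
      (hhom : ∀ e ∈ E, (fx e.1, fy e.2) ∈ { e ∈ E | e.1 ∈ px ∧ e.2 ∈ py })
      (hfixx : ∀ v ∈ px, fx v = v) (hfixy : ∀ v ∈ py, fy v = v)
      (h : ConstructibleBip X Y vx vy E k) :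
      ConstructibleBip X Y px py { e ∈ E | e.1 ∈ px ∧ e.2 ∈ py } k
  | iso (X Y X' Y' : Type) (vx : Set X) (vy : Set Y) (E : Set (X × Y)) (k : ℕ)
      (φx : X → X') (φy : Y → Y')
      (hinjx : Set.InjOn φx vx) (hinjy : Set.InjOn φy vy)
      (h : ConstructibleBip X Y vx vy E k) :
      ConstructibleBip X' Y' (φx '' vx) (φy '' vy)
        { e' | ∃ e ∈ E, e' = (φx e.1, φy e.2) } k

/-- The edge set of the cycle with shortcuts `𝔠_12`: vertices `{0,…,11}`, with an edge
between `u` and `v` iff `|u - v| ∈ {1, 3, 9, 11}`, viewed as a bipartite graph whose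
parts are the even and the odd vertices. -/
def shortcutEdges :
    Finset ({u : Fin 12 // u.val % 2 = 0} × {u : Fin 12 // u.val % 2 = 1}) :=
  Finset.univ.filter fun p =>
    (max p.1.1.val p.2.1.val - min p.1.1.val p.2.1.val) ∈ ({1, 3, 9, 11} : Finset ℕ)


/-!
Call the even vertices of `𝔠₁₂` rows and the odd ones columns. A constructible graph never
retracts onto an induced copy of `𝔠₁₂`, while `𝔠₁₂` retracts onto itself. The invariant passes
back through collapses and isomorphisms by composing retractions. For a doubling, project the
copy of `𝔠₁₂` down to the original graph and lift back along one of two sections: the inclusion,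
which moves only rows and columns lying on new vertices, or the map sending each old vertex to its
copy, which moves only rows lying on old original vertices. Since `𝔠₁₂` is rigid (an endomorphism
fixing all rows but one, or all columns but one, is the identity), one of them yields a retraction
downstairs unless two rows lie on old original vertices and two columns on new vertices. No edge
joins such vertices, whereas any two rows and two columns of `𝔠₁₂` span an edge.
-/

namespace Conditioning

open Function

section Pattern

variable {α β : Type*} (P : α → β → Prop)

def IsEndo (f : α → α) (g : β → β) : Prop :=
  ∀ a b, P a b → P (f a) (g b)

def RowRigid : Prop :=
  ∀ f g, IsEndo P f g → {a | f a ≠ a}.Subsingleton → f = id ∧ g = id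

def ColRigid : Prop :=
  ∀ f g, IsEndo P f g → {b | g b ≠ b}.Subsingleton → f = id ∧ g = id

def NoEmptyRectangle : Prop :=
  ∀ a a' b b', a ≠ a' → b ≠ b' → P a b ∨ P a b' ∨ P a' b ∨ P a' b'

end Pattern

theorem exists_forall_ne_imp_eq {α : Type*} [Nonempty α] {f : α → α}
    (hf : {a | f a ≠ a}.Subsingleton) : ∃ r, ∀ a, a ≠ r → f a = a := by
  by_cases hmoved : ∃ r, f r ≠ r
  · obtain ⟨r, hr⟩ := hmoved
    exact ⟨r, fun a ha => by_contra fun hfa => ha (hf hfa hr)⟩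
  · push Not at hmoved
    exact ⟨Classical.arbitrary α, fun a _ => hmoved a⟩

structure PatternRetract {α β X Y : Type*} (P : α → β → Prop) (E : Set (X × Y)) where
  embX : α → X
  embY : β → Y
  retX : X → α
  retY : Y → β
  mem_of_rel : ∀ a b, P a b → (embX a, embY b) ∈ E
  rel_of_mem : ∀ e ∈ E, P (retX e.1) (retY e.2)
  retX_embX : LeftInverse retX embX
  retY_embY : LeftInverse retY embY

section Doubling

variable {X Y : Type*} {E : Set (X × Y)} {ox : Set X} {oy : Set Y}

def doubleEdges (E : Set (X × Y)) (ox : Set X) (oy : Set Y) : Set ((X ⊕ X) × (Y ⊕ Y)) :=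
  { e' | ∃ e ∈ E, e' = (Sum.inl e.1, Sum.inl e.2) } ∪
  { e' | ∃ e ∈ E, (e.1 ∈ ox ∨ e.2 ∈ oy) ∧
    ((e.1 ∈ ox ∧ e'.1 = Sum.inr e.1) ∨ (e.1 ∉ ox ∧ e'.1 = Sum.inl e.1)) ∧
    ((e.2 ∈ oy ∧ e'.2 = Sum.inr e.2) ∨ (e.2 ∉ oy ∧ e'.2 = Sum.inl e.2)) }

def codiag {Z : Type*} : Z ⊕ Z → Z := Sum.elim id id

open Classical in
noncomputable def copyOf {Z : Type*} (o : Set Z) (z : Z) : Z ⊕ Z :=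
  if z ∈ o then Sum.inr z else Sum.inl z

theorem codiag_mem_of_mem_doubleEdges {p : (X ⊕ X) × (Y ⊕ Y)}
    (hp : p ∈ doubleEdges E ox oy) : (codiag p.1, codiag p.2) ∈ E := by
  rcases hp with ⟨e, he, rfl⟩ | ⟨e, he, -, hx, hy⟩
  · exact he
  · obtain ⟨p₁, p₂⟩ := p
    have h₁ : codiag p₁ = e.1 := by rcases hx with ⟨-, rfl⟩ | ⟨-, rfl⟩ <;> rfl
    have h₂ : codiag p₂ = e.2 := by rcases hy with ⟨-, rfl⟩ | ⟨-, rfl⟩ <;> rfl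
    rwa [h₁, h₂]

theorem inl_mem_doubleEdges {e : X × Y} (he : e ∈ E) :
    ((Sum.inl e.1, Sum.inl e.2) : (X ⊕ X) × (Y ⊕ Y)) ∈ doubleEdges E ox oy :=
  Or.inl ⟨e, he, rfl⟩

theorem copyOf_mem_doubleEdges {e : X × Y} (he : e ∈ E) :
    (copyOf ox e.1, copyOf oy e.2) ∈ doubleEdges E ox oy := by
  by_cases h₁ : e.1 ∈ ox <;> by_cases h₂ : e.2 ∈ oy <;>
    simp only [copyOf, h₁, h₂, if_true, if_false]
  · exact Or.inr ⟨e, he, Or.inl h₁, Or.inl ⟨h₁, rfl⟩, Or.inl ⟨h₂, rfl⟩⟩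
  · exact Or.inr ⟨e, he, Or.inl h₁, Or.inl ⟨h₁, rfl⟩, Or.inr ⟨h₂, rfl⟩⟩
  · exact Or.inr ⟨e, he, Or.inr h₂, Or.inr ⟨h₁, rfl⟩, Or.inl ⟨h₂, rfl⟩⟩
  · exact inl_mem_doubleEdges he

theorem mem_of_inr_mem_doubleEdges {x : X} {y : Y ⊕ Y}
    (h : (Sum.inr x, y) ∈ doubleEdges E ox oy) : x ∈ ox := by
  rcases h with ⟨e, -, he⟩ | ⟨e, -, -, ⟨hx, he⟩ | ⟨-, he⟩, -⟩
  · simp at he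
  · simp only [Sum.inr.injEq] at he
    rwa [he]
  · simp at he

theorem not_mem_of_inl_inr_mem_doubleEdges {x : X} {y : Y}
    (h : (Sum.inl x, Sum.inr y) ∈ doubleEdges E ox oy) : x ∉ ox := by
  rcases h with ⟨e, -, he⟩ | ⟨e, -, -, ⟨-, he⟩ | ⟨hx, he⟩, -⟩
  · simp at he
  · simp at he
  · simp only [Sum.inl.injEq] at he
    rwa [he]

theorem inl_codiag_ne {Z : Type*} {z : Z ⊕ Z} (h : Sum.inl (codiag z) ≠ z) :
    ∃ w, z = Sum.inr w := by
  cases z with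
  | inl w => exact absurd rfl h
  | inr w => exact ⟨w, rfl⟩

theorem copyOf_codiag_ne {Z : Type*} {o : Set Z} {z : Z ⊕ Z} (h : copyOf o (codiag z) ≠ z) :
    (∃ w ∈ o, z = Sum.inl w) ∨ (∃ w ∉ o, z = Sum.inr w) := by
  cases z with
  | inl w => by_cases hw : w ∈ o <;> simp_all [copyOf, codiag]
  | inr w => by_cases hw : w ∈ o <;> simp_all [copyOf, codiag]

end Doubling

namespace PatternRetract

variable {α β X Y X' Y' : Type*} {P : α → β → Prop} {E : Set (X × Y)}

section Transfer

variable {E' : Set (X' × Y')} (R : PatternRetract P E')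
  {fx : X' → X} {fy : Y' → Y} {gx : X → X'} {gy : Y → Y'}

def transfer (hf : ∀ e ∈ E', (fx e.1, fy e.2) ∈ E) (hg : ∀ e ∈ E, (gx e.1, gy e.2) ∈ E')
    (hx : ∀ a, R.retX (gx (fx (R.embX a))) = a) (hy : ∀ b, R.retY (gy (fy (R.embY b))) = b) :
    PatternRetract P E where
  embX := fx ∘ R.embX
  embY := fy ∘ R.embY
  retX := R.retX ∘ gx
  retY := R.retY ∘ gy
  mem_of_rel a b h := hf _ (R.mem_of_rel a b h)
  rel_of_mem e he := R.rel_of_mem _ (hg e he)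
  retX_embX := hx
  retY_embY := hy

theorem isEndo_comp (hf : ∀ e ∈ E', (fx e.1, fy e.2) ∈ E)
    (hg : ∀ e ∈ E, (gx e.1, gy e.2) ∈ E') :
    IsEndo P (fun a => R.retX (gx (fx (R.embX a)))) (fun b => R.retY (gy (fy (R.embY b)))) :=
  fun a b h => R.rel_of_mem _ (hg _ (hf _ (R.mem_of_rel a b h)))

theorem nonempty_of_comp_almost_fixes (hf : ∀ e ∈ E', (fx e.1, fy e.2) ∈ E)
    (hg : ∀ e ∈ E, (gx e.1, gy e.2) ∈ E') (hR : RowRigid P) (hC : ColRigid P)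
    (hfix : {a | gx (fx (R.embX a)) ≠ R.embX a}.Subsingleton ∨
      {b | gy (fy (R.embY b)) ≠ R.embY b}.Subsingleton) :
    Nonempty (PatternRetract P E) := by
  have hid : (fun a => R.retX (gx (fx (R.embX a)))) = id ∧
      (fun b => R.retY (gy (fy (R.embY b)))) = id := by
    rcases hfix with hfix | hfix
    · refine hR _ _ (R.isEndo_comp hf hg) (hfix.anti fun a ha h => ha ?_)
      simp only [h, R.retX_embX a]
    · refine hC _ _ (R.isEndo_comp hf hg) (hfix.anti fun b hb h => hb ?_)
      simp only [h, R.retY_embY b]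
  exact ⟨R.transfer hf hg (congrFun hid.1) (congrFun hid.2)⟩

end Transfer

theorem not_nonempty_singleton [Nontrivial α] (hrow : ∀ a, ∃ b, P a b) (x : X) (y : Y) :
    ¬ Nonempty (PatternRetract P ({(x, y)} : Set (X × Y))) := by
  rintro ⟨R⟩
  have hx : ∀ a, R.embX a = x := fun a =>
    let ⟨b, hab⟩ := hrow a
    congrArg Prod.fst (R.mem_of_rel a b hab)
  obtain ⟨a, a', ha⟩ := exists_pair_ne α
  exact ha (by rw [← R.retX_embX a, ← R.retX_embX a', hx, hx])

theorem nonempty_of_collapse (hrow : ∀ a, ∃ b, P a b) (hcol : ∀ b, ∃ a, P a b)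
    {px : Set X} {py : Set Y} {fx : X → X} {fy : Y → Y}
    (hhom : ∀ e ∈ E, (fx e.1, fy e.2) ∈ {e ∈ E | e.1 ∈ px ∧ e.2 ∈ py})
    (hfixx : ∀ v ∈ px, fx v = v) (hfixy : ∀ v ∈ py, fy v = v)
    (R : PatternRetract P {e ∈ E | e.1 ∈ px ∧ e.2 ∈ py}) : Nonempty (PatternRetract P E) := by
  refine ⟨R.transfer (fx := id) (fy := id) (fun e he => he.1) hhom (fun a => ?_) (fun b => ?_)⟩
  · obtain ⟨b, hab⟩ := hrow a
    rw [id_eq, hfixx _ (R.mem_of_rel a b hab).2.1, R.retX_embX]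
  · obtain ⟨a, hab⟩ := hcol b
    rw [id_eq, hfixy _ (R.mem_of_rel a b hab).2.2, R.retY_embY]

theorem nonempty_of_image [Nonempty α] (hrow : ∀ a, ∃ b, P a b) (hcol : ∀ b, ∃ a, P a b)
    {vx : Set X} {vy : Set Y} {φx : X → X'} {φy : Y → Y'}
    (hinjx : Set.InjOn φx vx) (hinjy : Set.InjOn φy vy) (hE : E ⊆ vx ×ˢ vy)
    (R : PatternRetract P {e' | ∃ e ∈ E, e' = (φx e.1, φy e.2)}) :
    Nonempty (PatternRetract P E) := by
  have ⟨_, _⟩ : Nonempty X ∧ Nonempty Y := by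
    obtain ⟨a⟩ := ‹Nonempty α›
    obtain ⟨b, hab⟩ := hrow a
    obtain ⟨e, -, -⟩ := R.mem_of_rel a b hab
    exact ⟨⟨e.1⟩, ⟨e.2⟩⟩
  have hf : ∀ e' ∈ {e' | ∃ e ∈ E, e' = (φx e.1, φy e.2)},
      (invFunOn φx vx e'.1, invFunOn φy vy e'.2) ∈ E := by
    rintro _ ⟨e, he, rfl⟩
    rwa [hinjx.leftInvOn_invFunOn (hE he).1, hinjy.leftInvOn_invFunOn (hE he).2]
  refine ⟨R.transfer hf (fun e he => ⟨e, he, rfl⟩) (fun a => ?_) (fun b => ?_)⟩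
  · obtain ⟨b, hab⟩ := hrow a
    obtain ⟨e, he, hAB⟩ := R.mem_of_rel a b hab
    rw [invFunOn_eq ⟨e.1, (hE he).1, (congrArg Prod.fst hAB).symm⟩, R.retX_embX]
  · obtain ⟨a, hab⟩ := hcol b
    obtain ⟨e, he, hAB⟩ := R.mem_of_rel a b hab
    rw [invFunOn_eq ⟨e.2, (hE he).2, (congrArg Prod.snd hAB).symm⟩, R.retY_embY]

theorem nonempty_of_doubleEdges {ox : Set X} {oy : Set Y} (hrow : ∀ a, ∃ b, P a b)
    (hR : RowRigid P) (hC : ColRigid P) (hbox : NoEmptyRectangle P)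
    (R : PatternRetract P (doubleEdges E ox oy)) : Nonempty (PatternRetract P E) := by
  have hf : ∀ p ∈ doubleEdges E ox oy, (codiag p.1, codiag p.2) ∈ E :=
    fun _ => codiag_mem_of_mem_doubleEdges
  have hinl : ∀ e ∈ E,
      ((Sum.inl e.1, Sum.inl e.2) : (X ⊕ X) × (Y ⊕ Y)) ∈ doubleEdges E ox oy :=
    fun _ => inl_mem_doubleEdges
  have hcopy : ∀ e ∈ E, (copyOf ox e.1, copyOf oy e.2) ∈ doubleEdges E ox oy :=
    fun _ => copyOf_mem_doubleEdges
  rcases {a | ∃ w, R.embX a = Sum.inr w}.subsingleton_or_nontrivial with hRX | -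
  · exact R.nonempty_of_comp_almost_fixes hf hinl hR hC
      (Or.inl (hRX.anti fun _ => inl_codiag_ne))
  rcases {b | ∃ y, R.embY b = Sum.inr y}.subsingleton_or_nontrivial with hRY | hRY
  · exact R.nonempty_of_comp_almost_fixes hf hinl hR hC
      (Or.inr (hRY.anti fun _ => inl_codiag_ne))
  rcases {a | ∃ w ∈ ox, R.embX a = Sum.inl w}.subsingleton_or_nontrivial with hLX | hLX
  · refine R.nonempty_of_comp_almost_fixes hf hcopy hR hC (Or.inl (hLX.anti fun a ha => ?_))
    refine (copyOf_codiag_ne ha).resolve_right ?_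
    rintro ⟨w, hw, hA⟩
    obtain ⟨b, hab⟩ := hrow a
    have hedge := R.mem_of_rel a b hab
    rw [hA] at hedge
    exact hw (mem_of_inr_mem_doubleEdges hedge)
  -- no edge joins an old original vertex to a new one
  exfalso
  obtain ⟨a, ⟨w, hw, hA⟩, a', ⟨w', hw', hA'⟩, ha⟩ := hLX
  obtain ⟨b, ⟨y, hB⟩, b', ⟨y', hB'⟩, hb⟩ := hRY
  have hnone : ∀ {a b x y}, x ∈ ox → R.embX a = Sum.inl x → R.embY b = Sum.inr y → ¬ P a b :=
    fun hx hA hB hab => not_mem_of_inl_inr_mem_doubleEdges (hA ▸ hB ▸ R.mem_of_rel _ _ hab) hx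
  rcases hbox a a' b b' ha hb with h | h | h | h
  · exact hnone hw hA hB h
  · exact hnone hw hA hB' h
  · exact hnone hw' hA' hB h
  · exact hnone hw' hA' hB' h

end PatternRetract

theorem _root_.ConstructibleBip.edges_subset_prod {X Y : Type} {vx : Set X} {vy : Set Y}
    {E : Set (X × Y)} {k : ℕ} (h : ConstructibleBip X Y vx vy E k) : E ⊆ vx ×ˢ vy := by
  induction h with
  | single X Y x y =>
    rintro e rfl
    exact ⟨rfl, rfl⟩
  | double X Y vx vy E ox oy k _ _ _ ih =>
    rintro e (⟨e₀, he₀, rfl⟩ | ⟨e₀, he₀, -, hx, hy⟩)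
    · exact ⟨Or.inl ⟨e₀.1, (ih he₀).1, rfl⟩, Or.inl ⟨e₀.2, (ih he₀).2, rfl⟩⟩
    · constructor
      · rcases hx with ⟨hm, he⟩ | ⟨-, he⟩ <;> rw [he]
        · exact Or.inr ⟨e₀.1, hm, rfl⟩
        · exact Or.inl ⟨e₀.1, (ih he₀).1, rfl⟩
      · rcases hy with ⟨hm, he⟩ | ⟨-, he⟩ <;> rw [he]
        · exact Or.inr ⟨e₀.2, hm, rfl⟩
        · exact Or.inl ⟨e₀.2, (ih he₀).2, rfl⟩
  | collapse => exact fun e he => he.2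
  | iso X Y X' Y' vx vy E k φx φy _ _ _ ih =>
    rintro e ⟨e₀, he₀, rfl⟩
    exact ⟨⟨e₀.1, (ih he₀).1, rfl⟩, ⟨e₀.2, (ih he₀).2, rfl⟩⟩

theorem _root_.ConstructibleBip.not_nonempty_patternRetract {α β : Type*} {P : α → β → Prop}
    [Nontrivial α] (hrow : ∀ a, ∃ b, P a b) (hcol : ∀ b, ∃ a, P a b) (hR : RowRigid P)
    (hC : ColRigid P) (hbox : NoEmptyRectangle P) {X Y : Type} {vx : Set X} {vy : Set Y}
    {E : Set (X × Y)} {k : ℕ} (h : ConstructibleBip X Y vx vy E k) :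
    ¬ Nonempty (PatternRetract P E) := by
  induction h with
  | single X Y x y => exact PatternRetract.not_nonempty_singleton hrow x y
  | double X Y vx vy E ox oy k _ _ _ ih =>
    exact fun ⟨R⟩ => ih (R.nonempty_of_doubleEdges hrow hR hC hbox)
  | collapse X Y vx px vy py E k fx fy _ _ hhom hfixx hfixy _ ih =>
    exact fun ⟨R⟩ => ih (R.nonempty_of_collapse hrow hcol hhom hfixx hfixy)
  | iso X Y X' Y' vx vy E k φx φy hinjx hinjy h ih =>
    exact fun ⟨R⟩ => ih (R.nonempty_of_image hrow hcol hinjx hinjy h.edges_subset_prod)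

-- Row `a` is the vertex `2a`, column `b` the vertex `2b + 1`; their difference `2(b - a) + 1`
-- is `±1` or `±3` mod 12 iff `b - a ∈ {0, 1, 4, 5}` mod 6.
def shortcutPattern (a b : Fin 6) : Prop :=
  b - a ∈ ({0, 1, 4, 5} : Finset (Fin 6))

instance : DecidableRel shortcutPattern := fun a b =>
  inferInstanceAs (Decidable (b - a ∈ _))

theorem shortcutPattern_self : ∀ a, shortcutPattern a a := by decide

theorem shortcutPattern_neg_swap :
    ∀ a b, shortcutPattern a b ↔ shortcutPattern (-b) (-a) := by
  decide

theorem noEmptyRectangle_shortcutPattern : NoEmptyRectangle shortcutPattern := by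
  unfold NoEmptyRectangle; decide

-- Column `b` is adjacent to rows `b - 1, …, b + 2`. Unless `r` is an end of this interval
-- (`b = r + 1` or `b = r + 4`), the remaining rows are adjacent to no other column.
theorem shortcutPattern_col_eq : ∀ r b v : Fin 6, b ≠ r + 1 → b ≠ r + 4 →
    (∀ a, a ≠ r → shortcutPattern a b → shortcutPattern a v) → v = b := by
  decide

set_option synthInstance.maxSize 1000 in
theorem shortcutPattern_row_eq : ∀ r s v₁ v₄ : Fin 6,
    (∀ a, a ≠ r → shortcutPattern a (r + 1) → shortcutPattern a v₁) →
    (∀ a, a ≠ r → shortcutPattern a (r + 4) → shortcutPattern a v₄) →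
    shortcutPattern s r → shortcutPattern s (r + 5) → shortcutPattern s v₁ →
    shortcutPattern s v₄ → s = r ∧ v₁ = r + 1 ∧ v₄ = r + 4 := by
  decide

theorem shortcutPattern_eq_id_of_forall_ne {f g : Fin 6 → Fin 6}
    (h : IsEndo shortcutPattern f g) (r : Fin 6) (hr : ∀ a, a ≠ r → f a = a) :
    f = id ∧ g = id := by
  have hcol : ∀ b a, a ≠ r → shortcutPattern a b → shortcutPattern a (g b) :=
    fun b a ha hab => hr a ha ▸ h a b hab
  have hg : ∀ b, b ≠ r + 1 → b ≠ r + 4 → g b = b :=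
    fun b h₁ h₄ => shortcutPattern_col_eq r b (g b) h₁ h₄ (hcol b)
  have hgr : g r = r := hg r (by simp) (by simp)
  have hgr₅ : g (r + 5) = r + 5 := hg (r + 5) (by simp) (by simp)
  obtain ⟨hfr, hg₁, hg₄⟩ := shortcutPattern_row_eq r (f r) (g (r + 1)) (g (r + 4))
    (hcol _) (hcol _) (by simpa only [hgr] using h r r (shortcutPattern_self r))
    (by simpa only [hgr₅] using h r (r + 5) (by simp [shortcutPattern]))
    (h r (r + 1) (by simp [shortcutPattern])) (h r (r + 4) (by simp [shortcutPattern]))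
  refine ⟨funext fun a => ?_, funext fun b => ?_⟩
  · by_cases ha : a = r
    · exact ha ▸ hfr
    · exact hr a ha
  · by_cases h₁ : b = r + 1
    · exact h₁ ▸ hg₁
    by_cases h₄ : b = r + 4
    · exact h₄ ▸ hg₄
    exact hg b h₁ h₄

theorem rowRigid_shortcutPattern : RowRigid shortcutPattern := fun _ _ h hf =>
  let ⟨r, hr⟩ := exists_forall_ne_imp_eq hf
  shortcutPattern_eq_id_of_forall_ne h r hr

theorem colRigid_shortcutPattern : ColRigid shortcutPattern := by
  intro f g h hg
  obtain ⟨r, hr⟩ := exists_forall_ne_imp_eq hg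
  have h' : IsEndo shortcutPattern (fun a => -g (-a)) (fun b => -f (-b)) := fun a b hab => by
    rw [shortcutPattern_neg_swap] at hab ⊢
    simpa using h _ _ hab
  obtain ⟨hg', hf'⟩ := shortcutPattern_eq_id_of_forall_ne h' (-r) fun a ha => by
    rw [hr (-a) (by simpa [neg_eq_iff_eq_neg] using ha), neg_neg]
  exact ⟨funext fun b => by simpa using congrFun hf' (-b),
    funext fun a => by simpa using congrFun hg' (-a)⟩

def evenVertex (a : Fin 6) : {u : Fin 12 // u.val % 2 = 0} :=
  ⟨⟨2 * a.val, by omega⟩, by simp⟩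

def oddVertex (b : Fin 6) : {u : Fin 12 // u.val % 2 = 1} :=
  ⟨⟨2 * b.val + 1, by omega⟩, by simp⟩

def halfEven (x : {u : Fin 12 // u.val % 2 = 0}) : Fin 6 :=
  ⟨x.1.val / 2, by omega⟩

def halfOdd (y : {u : Fin 12 // u.val % 2 = 1}) : Fin 6 :=
  ⟨y.1.val / 2, by omega⟩

theorem shortcutEdges_mem_iff :
    ∀ a b, (evenVertex a, oddVertex b) ∈ shortcutEdges ↔ shortcutPattern a b := by
  decide

theorem shortcutPattern_of_mem_shortcutEdges :
    ∀ e ∈ shortcutEdges, shortcutPattern (halfEven e.1) (halfOdd e.2) := by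
  decide

def shortcutRetract : PatternRetract shortcutPattern
    (↑shortcutEdges : Set ({u : Fin 12 // u.val % 2 = 0} × {u : Fin 12 // u.val % 2 = 1})) where
  embX := evenVertex
  embY := oddVertex
  retX := halfEven
  retY := halfOdd
  mem_of_rel a b := (shortcutEdges_mem_iff a b).mpr
  rel_of_mem := shortcutPattern_of_mem_shortcutEdges
  retX_embX := by decide
  retY_embY := by decide

end Conditioning

/-- The cycle with shortcuts `𝔠_12` is not constructible by conditioning. -/
theorem statement17 :
    ¬ ∃ k, ConstructibleBip {u : Fin 12 // u.val % 2 = 0} {u : Fin 12 // u.val % 2 = 1}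
      Set.univ Set.univ (↑shortcutEdges : Set _) k := by
  rintro ⟨k, h⟩
  open Conditioning in
  exact h.not_nonempty_patternRetract (fun a => ⟨a, shortcutPattern_self a⟩)
    (fun b => ⟨b, shortcutPattern_self b⟩) rowRigid_shortcutPattern colRigid_shortcutPattern
    noEmptyRectangle_shortcutPattern ⟨shortcutRetract⟩
end

section
/- Let Q̄ be an r-prover question set and let r' := |Q̄|. Then for every n ≥ 1, ω^CPR_Q̄(n) ≥ ω^HJ_{r'}(n): the minimum color-value of the n-fold repetition of a coloring game with question set Q̄ and color-value at least 2 is at least the minimum number of colors needed to color [r']^n with no monochromatic combinatorial line. -/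
/-- The color-value of a coloring game: the minimum, over strategies, of the number
of distinct outputs of `V` as the question tuple ranges over `Qbar`. -/
noncomputable def colorValue {r : ℕ} {Q A : Fin r → Type} {X : Type} [DecidableEq X]
    (Qbar : Finset (∀ j, Q j)) (V : (∀ j, Q j) → (∀ j, A j) → X) : ℕ :=
  sInf { c : ℕ | ∃ S : ∀ j, Q j → A j,
    c = (Qbar.image fun q => V q fun j => S j (q j)).card }

/-- The color-value of the `n`-fold parallel repetition of a coloring game: the output
on a question vector is the vector of the `n` coordinate-wise outputs of `V`. -/
noncomputable def colorRepValue {r : ℕ} {Q A : Fin r → Type} {X : Type} [DecidableEq X]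
    [∀ j, DecidableEq (Q j)]
    (n : ℕ) (Qbar : Finset (∀ j, Q j)) (V : (∀ j, Q j) → (∀ j, A j) → X) : ℕ :=
  sInf { c : ℕ | ∃ S : ∀ j, (Fin n → Q j) → (Fin n → A j),
    c = ((Fintype.piFinset fun _ : Fin n => Qbar).image fun q =>
      fun i => V (q i) fun j => S j (fun i' => q i' j) i).card }

/-- `ω^CPR_Q̄(n)`: the minimum of `cVal(Gⁿ)` over all coloring games `G` with question
set `Qbar` (finite nonempty answer alphabets, arbitrary output set) and `cVal(G) ≥ 2`. -/
noncomputable def omegaCPR {r : ℕ} {Q : Fin r → Type} [∀ j, DecidableEq (Q j)]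
    (Qbar : Finset (∀ j, Q j)) (n : ℕ) : ℕ :=
  sInf { c : ℕ | ∃ (A : Fin r → Type) (_ : ∀ j, Fintype (A j)) (_ : ∀ j, Nonempty (A j))
    (X : Type) (iX : DecidableEq X) (V : (∀ j, Q j) → (∀ j, A j) → X),
      2 ≤ @colorValue r Q A X iX Qbar V ∧ c = @colorRepValue r Q A X iX _ n Qbar V }

/-- The coloring `C` of `[r]^n` has a monochromatic combinatorial line. -/
def HasMonoLine {r n : ℕ} {X : Type} (C : (Fin n → Fin r) → X) : Prop :=
  ∃ b : Fin n → Option (Fin r), (∃ i, b i = none) ∧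
    ∀ q q' : Fin r, C (fun i => (b i).getD q) = C (fun i => (b i).getD q')

/-- `ω^HJ_r(n)`: the minimum number of colors `c` admitting a coloring of `[r]^n`
with no monochromatic combinatorial line. -/
noncomputable def omegaHJ (r n : ℕ) : ℕ :=
  sInf { c : ℕ | ∃ C : (Fin n → Fin r) → Fin c, ¬ HasMonoLine C }

/-! Take an optimal strategy `S` for `Gⁿ` and colour a point `x ∈ [r']ⁿ` (after enumerating `Q̄`
as `[r']`) by the output vector of `Gⁿ` under `S` on the question vector `x`; this uses
`cVal(Gⁿ)` colours. Along a monochromatic combinatorial line with wildcard coordinate `i₀`,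
freezing the fixed coordinates turns the `i₀`-th coordinate of `S` into a single-round strategy
for `G` whose output does not depend on the question, so `cVal(G) ≤ 1`. Hence for `cVal(G) ≥ 2`
this colouring has no monochromatic line. -/

section ColoringGame

variable {r : ℕ} {Q A : Fin r → Type} {X : Type}

theorem hasMonoLine_of_card_le_one {k n : ℕ} (hk : k ≤ 1) (hn : 1 ≤ n)
    (C : (Fin n → Fin k) → X) : HasMonoLine C := by
  have : Subsingleton (Fin k) := Fin.subsingleton_iff_le_one.mpr hk
  exact ⟨fun _ => none, ⟨⟨0, hn⟩, rfl⟩, fun q q' => by rw [Subsingleton.elim q q']⟩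

theorem omegaHJ_eq_zero_of_card_le_one {k n : ℕ} (hk : k ≤ 1) (hn : 1 ≤ n) : omegaHJ k n = 0 :=
  Nat.sInf_eq_zero.mpr <| Or.inr <| Set.eq_empty_of_forall_notMem fun _ ⟨C, hC⟩ =>
    hC (hasMonoLine_of_card_le_one hk hn C)

theorem omegaHJ_le_card {k n : ℕ} (C : (Fin n → Fin k) → X) (hC : ¬HasMonoLine C)
    (s : Finset X) (hs : ∀ x, C x ∈ s) : omegaHJ k n ≤ s.card := by
  refine Nat.sInf_le ⟨fun x => s.equivFin ⟨C x, hs x⟩, fun ⟨b, hb, hmono⟩ => hC ⟨b, hb, ?_⟩⟩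
  exact fun q q' => congrArg Subtype.val (s.equivFin.injective (hmono q q'))

def repeatedOutput {n : ℕ} (V : (∀ j, Q j) → (∀ j, A j) → X)
    (S : ∀ j, (Fin n → Q j) → (Fin n → A j)) (q : Fin n → ∀ j, Q j) : Fin n → X :=
  fun i => V (q i) fun j => S j (fun i' => q i' j) i

theorem exists_strategy_eq_repeatedOutput_line {n k : ℕ} (V : (∀ j, Q j) → (∀ j, A j) → X)
    (S : ∀ j, (Fin n → Q j) → (Fin n → A j)) (f : Fin k → ∀ j, Q j)
    (b : Fin n → Option (Fin k)) {i₀ : Fin n} (hi₀ : b i₀ = none) :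
    ∃ T : ∀ j, Q j → A j, ∀ p,
      V (f p) (fun j => T j (f p j)) = repeatedOutput V S (fun i => f ((b i).getD p)) i₀ := by
  refine ⟨fun j x => S j (fun i => ((b i).map fun s => f s j).getD x) i₀, fun p => ?_⟩
  have hline : ∀ j, (fun i => ((b i).map fun s => f s j).getD (f p j)) =
      fun i => f ((b i).getD p) j := by
    intro j; funext i; cases b i <;> rfl
  simp only [repeatedOutput, hi₀, Option.getD_none, hline]

variable [DecidableEq X]

theorem colorValue_le_one_of_const {Qbar : Finset (∀ j, Q j)} {V : (∀ j, Q j) → (∀ j, A j) → X}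
    (T : ∀ j, Q j → A j)
    (hT : ∀ q ∈ Qbar, ∀ q' ∈ Qbar, V q (fun j => T j (q j)) = V q' (fun j => T j (q' j))) :
    colorValue Qbar V ≤ 1 := by
  have hle_image : colorValue Qbar V ≤ (Qbar.image fun q => V q fun j => T j (q j)).card :=
    Nat.sInf_le ⟨T, rfl⟩
  refine hle_image.trans (Finset.card_le_one.mpr ?_)
  simp only [Finset.mem_image]
  rintro _ ⟨q, hq, rfl⟩ _ ⟨q', hq', rfl⟩
  exact hT q hq q' hq'

theorem exists_colorRepValue_eq [∀ j, DecidableEq (Q j)] [∀ j, Nonempty (A j)] (n : ℕ)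
    (Qbar : Finset (∀ j, Q j)) (V : (∀ j, Q j) → (∀ j, A j) → X) :
    ∃ S : ∀ j, (Fin n → Q j) → (Fin n → A j), colorRepValue n Qbar V =
      ((Fintype.piFinset fun _ : Fin n => Qbar).image (repeatedOutput V S)).card := by
  have hne : {c | ∃ S : ∀ j, (Fin n → Q j) → (Fin n → A j),
      c = ((Fintype.piFinset fun _ : Fin n => Qbar).image (repeatedOutput V S)).card}.Nonempty :=
    ⟨_, fun _ _ _ => Classical.arbitrary _, rfl⟩
  exact Nat.sInf_mem hne

theorem colorValue_self [DecidableEq (∀ j, Q j)] (Qbar : Finset (∀ j, Q j)) :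
    colorValue Qbar (fun q (_ : ∀ _ : Fin r, PUnit) => q) = Qbar.card := by
  simp [colorValue, Finset.image_id']

theorem omegaHJ_le_colorRepValue [∀ j, DecidableEq (Q j)] [∀ j, Nonempty (A j)]
    (Qbar : Finset (∀ j, Q j)) (V : (∀ j, Q j) → (∀ j, A j) → X) (hV : 2 ≤ colorValue Qbar V) (n : ℕ) :
    omegaHJ Qbar.card n ≤ colorRepValue n Qbar V := by
  obtain ⟨S, hS⟩ := exists_colorRepValue_eq n Qbar V
  let f : Fin Qbar.card → ∀ j, Q j := fun p => Qbar.equivFin.symm p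
  have hf : ∀ q (hq : q ∈ Qbar), f (Qbar.equivFin ⟨q, hq⟩) = q := by simp [f]
  rw [hS]
  refine omegaHJ_le_card (fun x => repeatedOutput V S (f ∘ x)) ?_ _ fun x =>
    Finset.mem_image_of_mem _ (Fintype.mem_piFinset.mpr fun i => (Qbar.equivFin.symm _).2)
  rintro ⟨b, ⟨i₀, hi₀⟩, hmono⟩
  obtain ⟨T, hT⟩ := exists_strategy_eq_repeatedOutput_line V S f b hi₀
  have hconst : ∀ p p', V (f p) (fun j => T j (f p j)) = V (f p') (fun j => T j (f p' j)) :=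
    fun p p' => by rw [hT, hT]; exact congrFun (hmono p p') i₀
  have hle : colorValue Qbar V ≤ 1 := colorValue_le_one_of_const T fun q hq q' hq' => by
    rw [← hf q hq, ← hf q' hq']; exact hconst _ _
  omega

end ColoringGame

theorem statement18_general (r : ℕ) (Q : Fin r → Type)
    [∀ j, DecidableEq (Q j)] (Qbar : Finset (∀ j, Q j))
    (n : ℕ) (hn : 1 ≤ n) :
    omegaHJ Qbar.card n ≤ omegaCPR Qbar n := by
  -- For `|Q̄| ≤ 1` no game has `cVal ≥ 2`, so `omegaCPR` is `sInf ∅ = 0`; but then so is `omegaHJ`.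
  by_cases hk : Qbar.card ≤ 1
  · rw [omegaHJ_eq_zero_of_card_le_one hk hn]
    exact Nat.zero_le _
  have hself : 2 ≤ colorValue Qbar (fun q (_ : ∀ _ : Fin r, PUnit) => q) := by
    rw [colorValue_self]; omega
  refine le_csInf
    ⟨_, fun _ => PUnit, inferInstance, inferInstance, _, inferInstance, _, hself, rfl⟩ ?_
  rintro _ ⟨A, _, _, X, _, V, hV, rfl⟩
  exact omegaHJ_le_colorRepValue Qbar V hV n

/-- For every `r`-prover question set `Q̄` with `|Q̄| = r'` and every `n ≥ 1`,
`ω^CPR_Q̄(n) ≥ ω^HJ_{r'}(n)`. -/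
theorem statement18 (r : ℕ) (Q : Fin r → Type) [∀ j, Fintype (Q j)]
    [∀ j, DecidableEq (Q j)] (Qbar : Finset (∀ j, Q j)) (hne : Qbar.Nonempty)
    (hcov : ∀ (j : Fin r) (x : Q j), ∃ q ∈ Qbar, q j = x)
    (n : ℕ) (hn : 1 ≤ n) :
    omegaHJ Qbar.card n ≤ omegaCPR Qbar n :=
  statement18_general r Q Qbar n hn
end

section
/- Let r ≥ 3. Then for every n ≥ 1, ω^HJ_r(n) ≥ ω^CPR_{Q̄_r}(n): the minimum number of colors needed to color [r]^n with no monochromatic combinatorial line is at least the minimum color-value of the n-fold repetition of a coloring game with question set Q̄_r and color-value at least 2. -/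
/-- The question set `Q̄_r ⊆ {0,1}^r`: tuples with exactly one coordinate equal to 1. -/
def QbarR (r : ℕ) : Finset (Fin r → Bool) :=
  Finset.univ.filter fun q => (Finset.univ.filter fun j => q j = true).card = 1

/-! A coloring `C` of `[r]^n` without monochromatic lines yields a game `G_C` with `cVal(G_C) ≥ 2`
and `cVal(G_Cⁿ) ≤ #colors`. Each prover answers a subset of `[n]` and a coordinate `m ∈ [n]`; the
verifier accepts if the sets partition `[n]`, the coordinates agree, and the active prover's set
contains `m`, and then outputs the color of the word read off the partition (otherwise it outputs the
question). In `G_Cⁿ` prover `j` sees the set of rounds in which it is active, so answering that set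
makes every round accepted with the same word, hence the same color. In a one-shot strategy with a
single color every question is accepted; the words read off at the `r` questions then agree outside
the rounds no inactive prover claims (the active prover's set changes, the inactive ones do not),
which form a nonempty set since they contain `m`: they are the points of a combinatorial line of one
color. -/

section Combinatorics

variable {r : ℕ}

lemma exists_ne_ne (hr : 3 ≤ r) (j j' : Fin r) : ∃ k, k ≠ j ∧ k ≠ j' := by
  obtain ⟨k, hk⟩ : ({j, j'}ᶜ : Finset (Fin r)).Nonempty := by
    rw [← Finset.card_pos, Finset.card_compl, Fintype.card_fin]
    have := Finset.card_le_two (a := j) (b := j')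
    omega
  exact ⟨k, by simpa [not_or] using hk⟩

/-- A self-map of `Fin r` whose fibres over `j` agree away from `j` is either the identity or
constant. -/
lemma exists_getD_eq_of_fiber_eq (hr : 3 ≤ r) (f : Fin r → Fin r)
    (hf : ∀ j k k', j ≠ k → j ≠ k' → (f k = j ↔ f k' = j)) :
    ∃ o : Option (Fin r), ∀ k, f k = o.getD k := by
  by_cases hid : ∀ k, f k = k
  · exact ⟨none, hid⟩
  obtain ⟨k, hk⟩ := not_forall.mp hid
  have hconst : ∀ k', k' ≠ f k → f k' = f k := fun k' hk' =>
    (hf (f k) k k' hk (Ne.symm hk')).mp rfl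
  refine ⟨some (f k), fun k' => ?_⟩
  rcases ne_or_eq k' (f k) with hk' | rfl
  · exact hconst k' hk'
  · show f (f k) = f k
    by_contra hne
    obtain ⟨k'', hk''1, hk''2⟩ := exists_ne_ne hr (f k) (f (f k))
    exact hne (((hf _ _ _ hne (Ne.symm hk''2)).mp rfl).symm.trans (hconst k'' hk''1))

lemma not_hasMonoLine_of_injective (hr : 1 < r) {n : ℕ} {X : Type}
    {C : (Fin n → Fin r) → X} (hC : Function.Injective C) : ¬ HasMonoLine C := by
  rintro ⟨b, ⟨i, hi⟩, hmono⟩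
  have := congrFun (hC (hmono ⟨0, by omega⟩ ⟨1, hr⟩)) i
  simp [hi] at this

lemma exists_coloring_omegaHJ (hr : 1 < r) (n : ℕ) :
    ∃ C : (Fin n → Fin r) → Fin (omegaHJ r n), ¬ HasMonoLine C :=
  Nat.sInf_mem (⟨_, Fintype.equivFin _, not_hasMonoLine_of_injective hr (Equiv.injective _)⟩ :
    {c | ∃ C : (Fin n → Fin r) → Fin c, ¬ HasMonoLine C}.Nonempty)

end Combinatorics

section ColorValue

variable {r : ℕ} {Q A : Fin r → Type} {X : Type} [DecidableEq X]

lemma le_colorValue [∀ j, Nonempty (A j)] {Qbar : Finset (∀ j, Q j)}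
    {V : (∀ j, Q j) → (∀ j, A j) → X} {k : ℕ}
    (h : ∀ S : ∀ j, Q j → A j, k ≤ (Qbar.image fun q => V q fun j => S j (q j)).card) :
    k ≤ colorValue Qbar V :=
  le_csInf ⟨_, fun _ _ => Classical.arbitrary _, rfl⟩ (by rintro _ ⟨S, rfl⟩; exact h S)

variable [∀ j, DecidableEq (Q j)]

lemma colorRepValue_le (n : ℕ) (Qbar : Finset (∀ j, Q j)) (V : (∀ j, Q j) → (∀ j, A j) → X)
    (S : ∀ j, (Fin n → Q j) → (Fin n → A j)) :
    colorRepValue n Qbar V ≤ ((Fintype.piFinset fun _ : Fin n => Qbar).image fun q =>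
      fun i => V (q i) fun j => S j (fun i' => q i' j) i).card :=
  Nat.sInf_le ⟨S, rfl⟩

lemma omegaCPR_le_colorRepValue [∀ j, Fintype (A j)] [∀ j, Nonempty (A j)] (n : ℕ)
    {Qbar : Finset (∀ j, Q j)} {V : (∀ j, Q j) → (∀ j, A j) → X} (hV : 2 ≤ colorValue Qbar V) :
    omegaCPR Qbar n ≤ colorRepValue n Qbar V :=
  Nat.sInf_le ⟨A, inferInstance, inferInstance, X, inferInstance, V, hV, rfl⟩

end ColorValue

namespace LineGame

variable {r n : ℕ} {X : Type}

def oneHot (k : Fin r) : Fin r → Bool := fun j => decide (j = k)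

@[simp]
lemma oneHot_apply (k j : Fin r) : oneHot k j = decide (j = k) := rfl

lemma oneHot_injective : Function.Injective (oneHot (r := r)) := fun k k' h => by
  simpa using congrFun h k

lemma mem_QbarR_iff {q : Fin r → Bool} : q ∈ QbarR r ↔ ∃ k, q = oneHot k := by
  simp only [QbarR, Finset.mem_filter, Finset.mem_univ, true_and, Finset.card_eq_one]
  refine exists_congr fun k => ?_
  simp only [Finset.ext_iff, Finset.mem_filter, Finset.mem_univ, true_and, Finset.mem_singleton,
    funext_iff, oneHot_apply]
  refine forall_congr' fun j => ?_
  cases q j <;> simp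

lemma oneHot_mem_QbarR (k : Fin r) : oneHot k ∈ QbarR r := mem_QbarR_iff.mpr ⟨k, rfl⟩

abbrev Answer (n : ℕ) := (Fin n → Bool) × Fin n

def Decodes (a : Fin r → Answer n) (w : Fin n → Fin r) : Prop :=
  ∀ j p, (a j).1 p = true ↔ w p = j

lemma Decodes.unique {a : Fin r → Answer n} {w w' : Fin n → Fin r} (h : Decodes a w)
    (h' : Decodes a w') : w = w' :=
  funext fun p => (h (w' p) p).mp ((h' (w' p) p).mpr rfl)

def Accepts (q : Fin r → Bool) (a : Fin r → Answer n) : Prop :=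
  (∃ w, Decodes a w) ∧ (∀ j j', (a j).2 = (a j').2) ∧ ∀ j, q j = true → (a j).1 (a j).2 = true

open Classical in
noncomputable def gameV (C : (Fin n → Fin r) → X) (q : Fin r → Bool) (a : Fin r → Answer n) :
    X ⊕ (Fin r → Bool) :=
  if h : Accepts q a then .inl (C h.1.choose) else .inr q

lemma gameV_of_decodes {C : (Fin n → Fin r) → X} {q : Fin r → Bool} {a : Fin r → Answer n}
    {w : Fin n → Fin r} (h : Accepts q a) (hw : Decodes a w) : gameV C q a = .inl (C w) := by
  rw [gameV, dif_pos h, h.1.choose_spec.unique hw]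

lemma gameV_of_not_accepts {C : (Fin n → Fin r) → X} {q : Fin r → Bool} {a : Fin r → Answer n}
    (h : ¬ Accepts q a) : gameV C q a = .inr q :=
  dif_neg h

lemma forall_accepts_of_gameV_eq (hr : 1 < r) {C : (Fin n → Fin r) → X}
    {a : Fin r → Fin r → Answer n}
    (heq : ∀ k k', gameV C (oneHot k) (a k) = gameV C (oneHot k') (a k')) :
    ∀ k, Accepts (oneHot k) (a k) := by
  intro k
  by_contra hk
  have : Nontrivial (Fin r) := Fin.nontrivial_iff_two_le.mpr hr
  obtain ⟨k', hk'⟩ := exists_ne k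
  have h := heq k k'
  rw [gameV_of_not_accepts hk] at h
  by_cases hk'acc : Accepts (oneHot k') (a k')
  · obtain ⟨w, hw⟩ := hk'acc.1
    rw [gameV_of_decodes hk'acc hw] at h
    exact Sum.inr_ne_inl h
  · rw [gameV_of_not_accepts hk'acc] at h
    exact hk' (oneHot_injective (Sum.inr_injective h)).symm

lemma exists_line_of_forall_accepts (hr : 3 ≤ r) (S : Fin r → Bool → Answer n)
    (hacc : ∀ k, Accepts (oneHot k) fun j => S j (oneHot k j)) :
    ∃ b : Fin n → Option (Fin r), (∃ i, b i = none) ∧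
      ∀ k, Decodes (fun j => S j (oneHot k j)) fun p => (b p).getD k := by
  choose w hw using fun k => (hacc k).1
  have hcoord : ∀ k k', (S k true).2 = (S k' true).2 := by
    intro k k'
    obtain ⟨j, hjk, hjk'⟩ := exists_ne_ne hr k k'
    have h := (hacc k).2.1 k j
    have h' := (hacc k').2.1 k' j
    simp only [oneHot_apply, decide_true, hjk, hjk', decide_false] at h h'
    exact h.trans h'.symm
  obtain ⟨m, hm⟩ : ∃ m, ∀ k, (S k true).2 = m := ⟨_, fun k => hcoord k ⟨0, by omega⟩⟩
  have hwm : ∀ k, w k m = k := fun k =>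
    (hw k k m).mp (by simpa [hm] using (hacc k).2.2 k (by simp))
  have hfiber : ∀ p j k k', j ≠ k → j ≠ k' → (w k p = j ↔ w k' p = j) := by
    intro p j k k' hjk hjk'
    rw [← hw k j p, ← hw k' j p]
    simp [hjk, hjk']
  choose b hb using fun p => exists_getD_eq_of_fiber_eq hr (fun k => w k p) (hfiber p)
  refine ⟨b, ⟨m, ?_⟩, fun k j p => by simpa only [← hb p k] using hw k j p⟩
  refine Option.eq_none_iff_forall_ne_some.mpr fun j hj => ?_
  obtain ⟨k, hkj, -⟩ := exists_ne_ne hr j j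
  exact hkj (by simpa [hwm, hj] using hb m k)

variable [DecidableEq X]

theorem two_le_colorValue_gameV (hr : 3 ≤ r) [NeZero n] {C : (Fin n → Fin r) → X}
    (hC : ¬ HasMonoLine C) :
    2 ≤ colorValue (A := fun _ => Answer n) (QbarR r) (gameV C) := by
  refine le_colorValue fun S => ?_
  by_contra! hlt
  have heq : ∀ k k', gameV C (oneHot k) (fun j => S j (oneHot k j)) =
      gameV C (oneHot k') (fun j => S j (oneHot k' j)) := fun k k' =>
    Finset.card_le_one.mp (Nat.lt_succ_iff.mp hlt) _
      (Finset.mem_image_of_mem _ (oneHot_mem_QbarR k)) _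
      (Finset.mem_image_of_mem _ (oneHot_mem_QbarR k'))
  have hacc := forall_accepts_of_gameV_eq (by omega) heq
  obtain ⟨b, hwild, hb⟩ := exists_line_of_forall_accepts hr S hacc
  refine hC ⟨b, hwild, fun k k' => ?_⟩
  have h := heq k k'
  rwa [gameV_of_decodes (hacc k) (hb k), gameV_of_decodes (hacc k') (hb k'),
    Sum.inl_injective.eq_iff] at h

theorem colorRepValue_gameV_le [Fintype X] (C : (Fin n → Fin r) → X) :
    colorRepValue (A := fun _ => Answer n) n (QbarR r) (gameV C) ≤ Fintype.card X := by
  refine (colorRepValue_le n _ _ fun _ x i => (x, i)).trans ?_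
  refine (Finset.card_le_card fun v hv => ?_).trans
    (Finset.card_image_le (s := Finset.univ) (f := fun x : X => fun _ : Fin n =>
      (Sum.inl x : X ⊕ (Fin r → Bool))))
  obtain ⟨q, hq, rfl⟩ := Finset.mem_image.mp hv
  choose w hw using fun p => mem_QbarR_iff.mp (Fintype.mem_piFinset.mp hq p)
  have hdec : ∀ i : Fin n, Decodes (fun j => ((fun i' => q i' j), i)) w := fun i j p => by
    simp [hw p, eq_comm]
  exact Finset.mem_image.mpr ⟨C w, Finset.mem_univ _, funext fun i =>
    (gameV_of_decodes ⟨⟨w, hdec i⟩, fun _ _ => rfl, fun _ hj => hj⟩ (hdec i)).symm⟩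

end LineGame

open LineGame in
/-- For `r ≥ 3` and `n ≥ 1`, `ω^HJ_r(n) ≥ ω^CPR_{Q̄_r}(n)`. -/
theorem statement19 (r : ℕ) (hr : 3 ≤ r) (n : ℕ) (hn : 1 ≤ n) :
    omegaCPR (QbarR r) n ≤ omegaHJ r n := by
  have : NeZero n := ⟨by omega⟩
  obtain ⟨C, hC⟩ := exists_coloring_omegaHJ (by omega : 1 < r) n
  calc omegaCPR (QbarR r) n ≤ colorRepValue n (QbarR r) (gameV C) :=
        omegaCPR_le_colorRepValue n (two_le_colorValue_gameV hr hC)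
    _ ≤ Fintype.card (Fin (omegaHJ r n)) := colorRepValue_gameV_le C
    _ = omegaHJ r n := Fintype.card_fin _
end
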